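/- Let W be an admissible Wilson loop diagram with 2 propagators on 6 vertices and let (p,v) be a non-degenerate boundary of W. Then the boundary positroid B(∂_{p,v}W) is a positroid properly contained in B(W), and it is maximal among positroids of rank 2 on {1,…,6} properly contained in B(W); that is, every non-degenerate boundary diagram parametrizes a codimension-one boundary cell of the 6-dimensional cell Σ(W). -/

import Mathlib

/-! Core combinatorial definitions for Wilson loop diagrams with 2 propagators on 6 vertices.
Vertices and edges of the hexagon are labelled by `Fin 6` (cyclically; edge `i` joins
vertices `i` and `i+1`). -/

namespace WLD

/-- Vertices / edges of the hexagon. -/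
abbrev V : Type := Fin 6

/-- The support of a propagator `p = {i, j}` (a pair of edges): `{i, i+1, j, j+1}`. -/
def supp (p : Finset V) : Finset V := p ∪ p.image (· + 1)

/-- Two propagators cross iff their edge pairs interleave in the cyclic order. -/
def Crossing (p q : Finset V) : Prop :=
  ∃ a b c d : V, a < b ∧ b < c ∧ c < d ∧
    ((p = {a, c} ∧ q = {b, d}) ∨ (p = {b, d} ∧ q = {a, c}))

/-- A Wilson loop diagram with 2 propagators on 6 vertices: a set of two distinct
propagators, each of which is a pair of distinct edges. -/
def IsWLD (P : Finset (Finset V)) : Prop :=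
  P.card = 2 ∧ ∀ p ∈ P, p.card = 2

/-- Admissibility: `|V_Q| ≥ |Q| + 3` for every nonempty subset of propagators, and
no two propagators cross. -/
def Admissible (P : Finset (Finset V)) : Prop :=
  IsWLD P ∧
  (∀ Q ⊆ P, Q.Nonempty → Q.card + 3 ≤ (Q.biUnion supp).card) ∧
  (∀ p ∈ P, ∀ q ∈ P, ¬ Crossing p q)

/-- The matrix `C(W)` associated to the (ordered) pair of propagators `(p, q)`,
with real parameters `c` in the support entries and `0` elsewhere. -/
def Cmat (p q : Finset V) (c : Fin 2 → V → ℝ) : Matrix (Fin 2) V ℝ :=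
  Matrix.of fun b a => if a ∈ supp (if b = 0 then p else q) then c b a else 0

/-- The `2×2` minor of a `2×6` matrix on columns `a`, `b`. -/
def mnr (M : Matrix (Fin 2) V ℝ) (a b : V) : ℝ := M 0 a * M 1 b - M 0 b * M 1 a

/-- The positroid `B(W)` of a Wilson loop diagram: the 2-element column sets on which
the minor of `C(W)` is not identically zero (i.e. nonzero for some parameter values). -/
def BW (P : Finset (Finset V)) : Set (Finset V) :=
  { I | ∃ p ∈ P, ∃ q ∈ P, p ≠ q ∧ ∃ a b : V, a < b ∧ I = {a, b} ∧
        ∃ c : Fin 2 → V → ℝ, mnr (Cmat p q c) a b ≠ 0 }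

/-- `M` is totally nonnegative (all `2×2` minors, in the column order, nonnegative). -/
def TNN (M : Matrix (Fin 2) V ℝ) : Prop := ∀ a b : V, a < b → 0 ≤ mnr M a b

/-- The set of nonvanishing maximal minors of `M` is exactly `B`. -/
def IsRep (B : Set (Finset V)) (M : Matrix (Fin 2) V ℝ) : Prop :=
  ∀ a b : V, a < b → (mnr M a b ≠ 0 ↔ ({a, b} : Finset V) ∈ B)

/-- A positroid of rank 2 on the 6 columns: a nonempty collection of 2-element subsets
realizable as the set of nonvanishing maximal minors of a rank-2 totally nonnegative
real `2×6` matrix. -/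
def IsPositroid (B : Set (Finset V)) : Prop :=
  B.Nonempty ∧ (∀ I ∈ B, I.card = 2) ∧
  ∃ M : Matrix (Fin 2) V ℝ, M.rank = 2 ∧ TNN M ∧ IsRep B M

/-- `B` is maximal among positroids properly contained in `B₀`. -/
def MaxProperSub (B B₀ : Set (Finset V)) : Prop :=
  IsPositroid B ∧ B ⊂ B₀ ∧
  ∀ B' : Set (Finset V), IsPositroid B' → B' ⊂ B₀ → B ⊆ B' → B' = B

/-! ### Boundaries of Wilson loop diagrams -/

/-- The smaller endpoint (edge) of a propagator. -/
def e1 (p : Finset V) : V := WithTop.untopD 0 p.min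
/-- The larger endpoint (edge) of a propagator. -/
def e2 (p : Finset V) : V := WithBot.unbotD 0 p.max

/-- The edge of `p` on which the support vertex `v` lies. -/
def edgeOf (p : Finset V) (v : V) : V :=
  if v = e1 p ∨ v = e1 p + 1 then e1 p else e2 p

/-- The endpoint of `p` other than `e`. -/
def oth (p : Finset V) (e : V) : V := if e1 p = e then e2 p else e1 p

/-- `p` is attached nearer to vertex `e` than `q` on the shared edge `e`
(in the non-crossing arrangement this means the other endpoint of `p` is
counterclockwise-further from `e`). -/
def NearerE (p q : Finset V) (e : V) : Prop :=
  (oth q e - e).val < (oth p e - e).val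

instance (p q : Finset V) (e : V) : Decidable (NearerE p q e) :=
  inferInstanceAs (Decidable (_ < _))

/-- The boundary move of `p` away from `v` collides with the other propagator `q`
(both end on the edge of `p` containing `v`, and `q`'s endpoint is in the way). -/
def IsCollision (p q : Finset V) (v : V) : Prop :=
  edgeOf p v ∈ q ∧
    ((v = edgeOf p v ∧ NearerE p q (edgeOf p v)) ∨
     (v = edgeOf p v + 1 ∧ NearerE q p (edgeOf p v)))

instance (p q : Finset V) (v : V) : Decidable (IsCollision p q v) :=
  inferInstanceAs (Decidable (_ ∧ _))

/-- The other propagator of a two-propagator diagram. -/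
noncomputable def otherProp (P : Finset (Finset V)) (p : Finset V) : Finset V :=
  if h : ∃ q, q ∈ P ∧ q ≠ p then h.choose else ∅

/-- The boundary `∂_{p,v}` of the diagram `{p, q}` is degenerate: this happens in the
vertex-removal case when the resulting diagram violates the support inequality. -/
def DegenerateB (p q : Finset V) (v : V) : Prop :=
  ¬ IsCollision p q v ∧ (((supp p).erase v) ∪ supp q).card < 5

/-- Degeneracy of the boundary `∂_{p,v}` of the diagram `P`. -/
def Degenerate (P : Finset (Finset V)) (p : Finset V) (v : V) : Prop :=
  DegenerateB p (otherProp P p) v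

/-- The positroid of the parameter family of matrices with supports given by `(p, q)`
subject to the constraint `cond`. -/
def BofFam (p q : Finset V) (cond : (Fin 2 → V → ℝ) → Prop) : Set (Finset V) :=
  { I | ∃ a b : V, a < b ∧ I = {a, b} ∧
        ∃ c : Fin 2 → V → ℝ, cond c ∧ mnr (Cmat p q c) a b ≠ 0 }

/-- The boundary positroid `B(∂_{p,v}W)` for the diagram `{p, q}`: in the collision
case the `2×2` minor on the columns of the shared edge is set to zero; in the
vertex-removal case the entry of `p` in column `v` is set to zero. -/
def BofBd (p q : Finset V) (v : V) : Set (Finset V) :=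
  BofFam p q fun c =>
    if IsCollision p q v then mnr (Cmat p q c) (edgeOf p v) (edgeOf p v + 1) = 0
    else c 0 v = 0

/-- The boundary positroid `B(∂_{p,v}W)` of the diagram `P` at `(p, v)`. -/
noncomputable def BofB (P : Finset (Finset V)) (p : Finset V) (v : V) : Set (Finset V) :=
  BofBd p (otherProp P p) v

end WLD

/-!
Both positroids are the pair sets of symmetric relations on the six columns: `B(W)` consists of
the pairs joining the supports of the two propagators, and a boundary either deletes `v` from
the support of `p` or, at a collision, drops the single pair `{e, e + 1}` of the shared edge.
Either way all lost pairs pass through one vertex `v₀`. Maximality is then a matroid argument: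
vanishing of `2 × 2` minors is transitive through a nonzero column (a three-term Plücker
relation), and this ties the lost pairs together, so a positroid between the two that contains
one of them contains them all. That the boundary is a positroid at all is checked configuration
by configuration, with a totally nonnegative integer matrix giving each parallel class its own
slope.
-/

namespace WLD

open Finset

lemma pair_eq_pair_iff {α : Type*} [DecidableEq α] {a b c d : α} :
    ({a, b} : Finset α) = {c, d} ↔ a = c ∧ b = d ∨ a = d ∧ b = c := by
  rw [← coe_inj, coe_pair, coe_pair, Set.pair_eq_pair_iff]

lemma mnr_swap (M : Matrix (Fin 2) V ℝ) (a b : V) : mnr M b a = - mnr M a b := by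
  simp only [mnr]; ring

lemma mnr_self (M : Matrix (Fin 2) V ℝ) (a : V) : mnr M a a = 0 := by
  simp only [mnr]; ring

lemma mnr_mul_mnr (M : Matrix (Fin 2) V ℝ) (a b c d : V) :
    mnr M a c * mnr M b d = mnr M a b * mnr M c d + mnr M a d * mnr M b c := by
  simp only [mnr]; ring

lemma mnr_eq_zero_trans {M : Matrix (Fin 2) V ℝ} {a b c d : V} (hab : mnr M a b = 0)
    (hbc : mnr M b c = 0) (hbd : mnr M b d ≠ 0) : mnr M a c = 0 := by
  have h := mnr_mul_mnr M a b c d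
  rw [hab, hbc, zero_mul, mul_zero, add_zero] at h
  exact (mul_eq_zero.mp h).resolve_right hbd

lemma rank_eq_two_of_mnr_ne_zero {M : Matrix (Fin 2) V ℝ} {a b : V} (h : mnr M a b ≠ 0) :
    M.rank = 2 := by
  have hdet : (M.submatrix id ![a, b]).det ≠ 0 := by
    simpa [Matrix.det_fin_two, mnr] using h
  refine le_antisymm (by simpa using M.rank_le_card_height) ?_
  simpa [Matrix.rank_of_det_ne_zero hdet] using M.rank_submatrix_le id ![a, b]

lemma pair_mem_of_isRep {B : Set (Finset V)} {M : Matrix (Fin 2) V ℝ} (hM : IsRep B M)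
    {a b : V} (hab : a ≠ b) : {a, b} ∈ B ↔ mnr M a b ≠ 0 := by
  rcases hab.lt_or_gt with hlt | hlt
  · exact (hM a b hlt).symm
  · rw [pair_comm, ← hM b a hlt, mnr_swap, neg_ne_zero]

def pairSet (R : V → V → Prop) : Set (Finset V) := {I | ∃ a b, a < b ∧ I = {a, b} ∧ R a b}

lemma pair_mem_pairSet_iff {R : V → V → Prop} [Std.Symm R] {a b : V} (hab : a ≠ b) :
    {a, b} ∈ pairSet R ↔ R a b := by
  constructor
  · rintro ⟨c, d, -, hI, h⟩
    rcases pair_eq_pair_iff.mp hI with ⟨rfl, rfl⟩ | ⟨rfl, rfl⟩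
    exacts [h, Std.Symm.symm _ _ h]
  · intro h
    rcases hab.lt_or_gt with hlt | hlt
    · exact ⟨a, b, hlt, rfl, h⟩
    · exact ⟨b, a, hlt, pair_comm a b, Std.Symm.symm _ _ h⟩

def colMatrix (w : V → ℤ × ℤ) : Matrix (Fin 2) V ℝ :=
  Matrix.of fun r a => if r = 0 then ((w a).1 : ℝ) else (w a).2

def intMinor (w : V → ℤ × ℤ) (a b : V) : ℤ := (w a).1 * (w b).2 - (w b).1 * (w a).2

lemma mnr_colMatrix (w : V → ℤ × ℤ) (a b : V) : mnr (colMatrix w) a b = intMinor w a b := by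
  simp [mnr, colMatrix, intMinor]

def IsTNNRealization (w : V → ℤ × ℤ) (R : V → V → Prop) : Prop :=
  ∀ a b, a < b → 0 ≤ intMinor w a b ∧ (intMinor w a b ≠ 0 ↔ R a b)

theorem isPositroid_pairSet {R : V → V → Prop} [Std.Symm R] {w : V → ℤ × ℤ}
    (hw : IsTNNRealization w R) (hne : ∃ a b, a < b ∧ R a b) : IsPositroid (pairSet R) := by
  obtain ⟨a, b, hab, h⟩ := hne
  refine ⟨⟨{a, b}, a, b, hab, rfl, h⟩, ?_, colMatrix w, ?_, ?_, ?_⟩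
  · rintro I ⟨c, d, hcd, rfl, -⟩
    exact card_pair hcd.ne
  · apply rank_eq_two_of_mnr_ne_zero (a := a) (b := b)
    rw [mnr_colMatrix]
    exact_mod_cast (hw a b hab).2.mpr h
  · intro c d hcd
    rw [mnr_colMatrix]
    exact_mod_cast (hw c d hcd).1
  · intro c d hcd
    rw [mnr_colMatrix, pair_mem_pairSet_iff hcd.ne, ← (hw c d hcd).2]
    exact_mod_cast Iff.rfl

/-- In any matrix whose nonzero minors lie between `R` and `R₀`, the lost pairs `{v₀, b}` are
tied together: `b` is a non-loop parallel to `c`, or `b` is joined to some `u` parallel to `v₀`. -/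
def Spreads (R R₀ : V → V → Prop) (v₀ : V) : Prop :=
  ∀ b c, R₀ v₀ b → ¬ R v₀ b → R₀ v₀ c → ¬ R v₀ c → b ≠ c →
    (¬ R₀ b c ∧ ∃ a, R a b) ∨ ∃ u, u ≠ v₀ ∧ ¬ R₀ u v₀ ∧ R u b

section Maximality

variable {R R₀ : V → V → Prop} {v₀ : V}

lemma mnr_ne_zero_of_spreads (hspread : Spreads R R₀ v₀) {M : Matrix (Fin 2) V ℝ}
    (hzero : ∀ x y, x ≠ y → ¬ R₀ x y → mnr M x y = 0) (hne : ∀ x y, R x y → mnr M x y ≠ 0)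
    {c : V} (hc₀ : R₀ v₀ c) (hc : ¬ R v₀ c) (hMc : mnr M v₀ c ≠ 0)
    {b : V} (hb₀ : R₀ v₀ b) (hb : ¬ R v₀ b) : mnr M v₀ b ≠ 0 := by
  obtain rfl | hbc := eq_or_ne b c
  · exact hMc
  intro hvb
  rcases hspread b c hb₀ hb hc₀ hc hbc with ⟨hbc₀, a, hab⟩ | ⟨u, huv, huv₀, hub⟩
  · have hba : mnr M b a ≠ 0 := by
      rw [mnr_swap]; exact neg_ne_zero.mpr (hne a b hab)
    exact hMc (mnr_eq_zero_trans hvb (hzero b c hbc hbc₀) hba)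
  · exact hne u b hub (mnr_eq_zero_trans (hzero u v₀ huv huv₀) hvb hMc)

theorem maxProperSub_pairSet [Std.Symm R] [Std.Symm R₀] [Std.Irrefl R₀]
    (hRR₀ : ∀ a b, R a b → R₀ a b) (hpos : IsPositroid (pairSet R))
    (hproper : ∃ a b, R₀ a b ∧ ¬ R a b) (hv₀ : ∀ a b, R₀ a b → ¬ R a b → a = v₀ ∨ b = v₀)
    (hspread : Spreads R R₀ v₀) : MaxProperSub (pairSet R) (pairSet R₀) := by
  have hne_of : ∀ {a b}, R₀ a b → a ≠ b := by
    rintro a b h rfl; exact Std.Irrefl.irrefl a h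
  have hsub : pairSet R ⊆ pairSet R₀ := by
    rintro I ⟨a, b, hab, rfl, h⟩; exact ⟨a, b, hab, rfl, hRR₀ a b h⟩
  refine ⟨hpos, ⟨hsub, fun hsup => ?_⟩, fun B' hB' hB'₀ hRB' => ?_⟩
  · obtain ⟨a, b, h₀, h⟩ := hproper
    have hab := hne_of h₀
    exact h ((pair_mem_pairSet_iff hab).mp (hsup ((pair_mem_pairSet_iff hab).mpr h₀)))
  obtain ⟨-, -, M, -, -, hM⟩ := hB'
  have hzero : ∀ x y, x ≠ y → ¬ R₀ x y → mnr M x y = 0 := fun x y hxy h₀ => by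
    by_contra hM'
    exact h₀ ((pair_mem_pairSet_iff hxy).mp (hB'₀.1 ((pair_mem_of_isRep hM hxy).mpr hM')))
  have hne : ∀ x y, R x y → mnr M x y ≠ 0 := fun x y h => by
    have hxy := hne_of (hRR₀ x y h)
    exact (pair_mem_of_isRep hM hxy).mp (hRB' ((pair_mem_pairSet_iff hxy).mpr h))
  by_contra hB'R
  obtain ⟨I, hIB', hIR⟩ := Set.not_subset.mp fun h => hB'R (h.antisymm hRB')
  obtain ⟨x, y, hxy, rfl, hxy₀⟩ := hB'₀.1 hIB'
  have hxyR : ¬ R x y := fun h => hIR ⟨x, y, hxy, rfl, h⟩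
  obtain ⟨c, hc₀, hc, hMc⟩ : ∃ c, R₀ v₀ c ∧ ¬ R v₀ c ∧ mnr M v₀ c ≠ 0 := by
    have hMxy := (pair_mem_of_isRep hM hxy.ne).mp hIB'
    rcases hv₀ x y hxy₀ hxyR with rfl | rfl
    · exact ⟨y, hxy₀, hxyR, hMxy⟩
    · refine ⟨x, Std.Symm.symm _ _ hxy₀, fun h => hxyR (Std.Symm.symm _ _ h), ?_⟩
      rwa [mnr_swap, neg_ne_zero]
  refine hB'₀.2 fun J hJ => ?_
  obtain ⟨a, b, hab, rfl, hab₀⟩ := hJ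
  by_cases habR : R a b
  · exact hRB' ⟨a, b, hab, rfl, habR⟩
  rw [pair_mem_of_isRep hM hab.ne]
  rcases hv₀ a b hab₀ habR with rfl | rfl
  · exact mnr_ne_zero_of_spreads hspread hzero hne hc₀ hc hMc hab₀ habR
  · rw [mnr_swap, neg_ne_zero]
    exact mnr_ne_zero_of_spreads hspread hzero hne hc₀ hc hMc (Std.Symm.symm _ _ hab₀)
      fun h => habR (Std.Symm.symm _ _ h)

end Maximality

def Joins (S T : Finset V) (a b : V) : Prop := a ≠ b ∧ (a ∈ S ∧ b ∈ T ∨ a ∈ T ∧ b ∈ S)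

instance (S T : Finset V) : DecidableRel (Joins S T) := fun _ _ => by
  unfold Joins; infer_instance

instance (S T : Finset V) : Std.Symm (Joins S T) :=
  ⟨fun _ _ ⟨hab, h⟩ => ⟨hab.symm, h.symm.imp And.symm And.symm⟩⟩

instance (S T : Finset V) : Std.Irrefl (Joins S T) := ⟨fun _ h => h.1 rfl⟩

lemma joins_comm {S T : Finset V} {a b : V} : Joins S T a b ↔ Joins T S a b := by
  simp only [Joins, or_comm]

lemma Joins.mono {S S' T : Finset V} (hS : S ⊆ S') {a b : V} (h : Joins S T a b) :
    Joins S' T a b :=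
  ⟨h.1, h.2.imp (And.imp_left (@hS a)) (And.imp_right (@hS b))⟩

def JoinsExcept (S T : Finset V) (e f : V) (a b : V) : Prop :=
  Joins S T a b ∧ ({a, b} : Finset V) ≠ {e, f}

instance (S T : Finset V) (e f : V) : DecidableRel (JoinsExcept S T e f) := fun _ _ => by
  unfold JoinsExcept; infer_instance

instance (S T : Finset V) (e f : V) : Std.Symm (JoinsExcept S T e f) :=
  ⟨fun a b h => ⟨Std.Symm.symm _ _ h.1, by rw [pair_comm]; exact h.2⟩⟩

def boundaryRel (p q : Finset V) (v : V) : V → V → Prop :=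
  if IsCollision p q v then JoinsExcept (supp p) (supp q) (edgeOf p v) (edgeOf p v + 1)
  else Joins ((supp p).erase v) (supp q)

instance (p q : Finset V) (v : V) : DecidableRel (boundaryRel p q v) := by
  unfold boundaryRel; split <;> infer_instance

instance (p q : Finset V) (v : V) : Std.Symm (boundaryRel p q v) := by
  unfold boundaryRel; split <;> infer_instance

def unitParams (a b : V) : Fin 2 → V → ℝ := ![Pi.single a 1, Pi.single b 1]

lemma mnr_Cmat_unitParams {p q : Finset V} {s t : V} (hst : s ≠ t) (hs : s ∈ supp p)
    (ht : t ∈ supp q) (a b : V) :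
    mnr (Cmat p q (unitParams s t)) a b ≠ 0 ↔ ({a, b} : Finset V) = {s, t} := by
  rw [pair_eq_pair_iff]
  simp only [mnr, Cmat, unitParams, Matrix.of_apply]
  by_cases has : a = s <;> by_cases hbt : b = t <;> by_cases hat : a = t <;>
    by_cases hbs : b = s <;> simp_all

lemma exists_pair_eq_of_joins {S T : Finset V} {a b : V} (h : Joins S T a b) :
    ∃ s ∈ S, ∃ t ∈ T, s ≠ t ∧ ({a, b} : Finset V) = {s, t} := by
  obtain ⟨hab, ⟨ha, hb⟩ | ⟨ha, hb⟩⟩ := h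
  exacts [⟨a, ha, b, hb, hab, rfl⟩, ⟨b, hb, a, ha, hab.symm, pair_comm a b⟩]

lemma joins_of_mnr_Cmat_ne_zero {p q : Finset V} {c : Fin 2 → V → ℝ} {a b : V}
    (h : mnr (Cmat p q c) a b ≠ 0) : Joins {x ∈ supp p | c 0 x ≠ 0} (supp q) a b := by
  have hterm : ∀ x y, Cmat p q c 0 x * Cmat p q c 1 y ≠ 0 →
      x ∈ {x ∈ supp p | c 0 x ≠ 0} ∧ y ∈ supp q := fun x y hxy => by
    simp only [Cmat, Matrix.of_apply, mem_filter] at hxy ⊢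
    split_ifs at hxy <;> simp_all
  have hterms : Cmat p q c 0 a * Cmat p q c 1 b ≠ 0 ∨ Cmat p q c 0 b * Cmat p q c 1 a ≠ 0 := by
    by_contra! hc
    exact h (by rw [mnr, hc.1, hc.2, sub_zero])
  exact ⟨fun hab => h (hab ▸ mnr_self _ a),
    hterms.imp (hterm a b) fun hba => (hterm b a hba).symm⟩

lemma BW_pair_eq_pairSet {p q : Finset V} (hpq : p ≠ q) :
    BW {p, q} = pairSet (Joins (supp p) (supp q)) := by
  ext I
  constructor
  · rintro ⟨p', hp', q', hq', hne, a, b, hab, rfl, c, hc⟩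
    have h := (joins_of_mnr_Cmat_ne_zero hc).mono (filter_subset _ _)
    refine ⟨a, b, hab, rfl, ?_⟩
    simp only [mem_insert, mem_singleton] at hp' hq'
    rcases hp' with rfl | rfl <;> rcases hq' with rfl | rfl
    exacts [absurd rfl hne, h, joins_comm.mp h, absurd rfl hne]
  · rintro ⟨a, b, hab, rfl, h⟩
    obtain ⟨s, hs, t, ht, hst, hab_st⟩ := exists_pair_eq_of_joins h
    exact ⟨p, by simp, q, by simp, hpq, a, b, hab, rfl, unitParams s t,
      (mnr_Cmat_unitParams hst hs ht a b).mpr hab_st⟩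

lemma BofBd_eq_pairSet (p q : Finset V) (v : V) : BofBd p q v = pairSet (boundaryRel p q v) := by
  ext I
  by_cases hcol : IsCollision p q v
  all_goals simp only [BofBd, BofFam, boundaryRel, hcol, if_true, if_false]
  · constructor
    · rintro ⟨a, b, hab, rfl, c, hcond, hc⟩
      refine ⟨a, b, hab, rfl, (joins_of_mnr_Cmat_ne_zero hc).mono (filter_subset _ _), fun he => ?_⟩
      rcases pair_eq_pair_iff.mp he with ⟨rfl, rfl⟩ | ⟨rfl, rfl⟩
      · exact hc hcond
      · exact hc (by rw [mnr_swap, hcond, neg_zero])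
    · rintro ⟨a, b, hab, rfl, h, hne⟩
      obtain ⟨s, hs, t, ht, hst, hab_st⟩ := exists_pair_eq_of_joins h
      refine ⟨a, b, hab, rfl, unitParams s t, ?_, (mnr_Cmat_unitParams hst hs ht a b).mpr hab_st⟩
      by_contra he
      exact hne (hab_st.trans ((mnr_Cmat_unitParams hst hs ht _ _).mp he).symm)
  · constructor
    · rintro ⟨a, b, hab, rfl, c, hcond, hc⟩
      refine ⟨a, b, hab, rfl, (joins_of_mnr_Cmat_ne_zero hc).mono fun x hx => ?_⟩
      rw [mem_filter] at hx
      exact mem_erase.mpr ⟨fun hxv => hx.2 (hxv ▸ hcond), hx.1⟩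
    · rintro ⟨a, b, hab, rfl, h⟩
      obtain ⟨s, hs, t, ht, hst, hab_st⟩ := exists_pair_eq_of_joins h
      refine ⟨a, b, hab, rfl, unitParams s t, ?_,
        (mnr_Cmat_unitParams hst (mem_of_mem_erase hs) ht a b).mpr hab_st⟩
      simp [unitParams, Pi.single_apply, (ne_of_mem_erase hs).symm]

section Levels

variable (R : V → V → Prop) [DecidableRel R]

def IsLoop (a : V) : Prop := ∀ b, ¬ R a b

instance : DecidablePred (IsLoop R) := fun _ => by unfold IsLoop; infer_instance

def StartsClass (a : V) : Prop := ¬ IsLoop R a ∧ ∀ c < a, ¬ IsLoop R c → R a c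

instance : DecidablePred (StartsClass R) := fun _ => by unfold StartsClass; infer_instance

def Wraps (a : V) : Prop := ∃ m c, m < c ∧ c < a ∧ ¬ IsLoop R m ∧ ¬ R a m ∧ R a c

instance : DecidablePred (Wraps R) := fun _ => by unfold Wraps; infer_instance

def level (a : V) : ℤ := #{b | b ≤ a ∧ StartsClass R b}

/-- Non-loops get slope `level`, the index of their parallel class in order of first appearance,
which makes the minors nonnegative as long as each class occupies a run of consecutive columns.
A column whose class was interrupted by another one (`Wraps`) is put on the first class, negated:
this is how the cyclic symmetry of positroids shows up in a fixed column order. -/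
def levelCol (a : V) : ℤ × ℤ :=
  if IsLoop R a then (0, 0) else if Wraps R a then (-1, -1) else (1, level R a)

end Levels

instance (w : V → ℤ × ℤ) (R : V → V → Prop) [DecidableRel R] :
    Decidable (IsTNNRealization w R) := by
  unfold IsTNNRealization; infer_instance

instance (p q : Finset V) : Decidable (Crossing p q) := by
  unfold Crossing; infer_instance

instance (p q : Finset V) (v : V) : Decidable (DegenerateB p q v) := by
  unfold DegenerateB; infer_instance

theorem isTNNRealization_boundaryRel :
    ∀ p ∈ powersetCard 2 (univ : Finset V), ∀ q ∈ powersetCard 2 (univ : Finset V),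
      4 ≤ #(supp p) → 4 ≤ #(supp q) → 5 ≤ #(supp p ∪ supp q) → ¬ Crossing p q →
      ∀ v ∈ supp p, ¬ DegenerateB p q v →
        (∃ a b, a < b ∧ boundaryRel p q v a b) ∧
          IsTNNRealization (levelCol (boundaryRel p q v)) (boundaryRel p q v) := by
  decide +kernel

theorem maxProperSub_joinsExcept {S T : Finset V} {e f : V} (hef : Joins S T e f)
    (hpos : IsPositroid (pairSet (JoinsExcept S T e f))) :
    MaxProperSub (pairSet (JoinsExcept S T e f)) (pairSet (Joins S T)) := by
  have hlost : ∀ {a b}, Joins S T a b → ¬ JoinsExcept S T e f a b →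
      ({a, b} : Finset V) = {e, f} := fun h h' => by_contra fun hne => h' ⟨h, hne⟩
  refine maxProperSub_pairSet (v₀ := e) (fun _ _ h => h.1) hpos ⟨e, f, hef, fun h => h.2 rfl⟩
    (fun a b h h' => ?_) (fun b c hb hb' hc hc' hbc => ?_)
  · rcases pair_eq_pair_iff.mp (hlost h h') with ⟨rfl, -⟩ | ⟨-, rfl⟩ <;> simp
  · have key : ∀ {x}, Joins S T e x → ¬ JoinsExcept S T e f e x → x = f := fun h h' => by
      rcases pair_eq_pair_iff.mp (hlost h h') with ⟨-, rfl⟩ | ⟨rfl, rfl⟩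
      exacts [rfl, absurd rfl h.1]
    exact absurd ((key hb hb').trans (key hc hc').symm) hbc

theorem maxProperSub_joins_erase {S T : Finset V} {v : V} (hv : v ∈ S)
    (hw : ∃ w ∈ S.erase v, w ∉ T) (ht : ∃ t ∈ T, t ∉ S)
    (hpos : IsPositroid (pairSet (Joins (S.erase v) T))) :
    MaxProperSub (pairSet (Joins (S.erase v) T)) (pairSet (Joins S T)) := by
  obtain ⟨w, hwS, hwT⟩ := hw
  obtain ⟨t, htT, htS⟩ := ht
  refine maxProperSub_pairSet (v₀ := v) (fun _ _ h => h.mono (erase_subset v S)) hpos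
    ⟨v, t, ?_, ?_⟩ (fun a b h h' => ?_) (fun b c hb hb' hc hc' hbc => ?_)
  · exact ⟨fun h => htS (h ▸ hv), .inl ⟨hv, htT⟩⟩
  · rintro ⟨-, ⟨h, -⟩ | ⟨-, h⟩⟩
    exacts [notMem_erase v S h, htS (mem_of_mem_erase h)]
  · by_contra! hab
    exact h' ⟨h.1, h.2.imp (And.imp_left (mem_erase.mpr ⟨hab.1, ·⟩))
      (And.imp_right (mem_erase.mpr ⟨hab.2, ·⟩))⟩
  · by_cases hvT : v ∈ T
    · have hnotS : ∀ {x}, Joins S T v x → ¬ Joins (S.erase v) T v x → x ∉ S :=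
        fun h h' hx => h' ⟨h.1, .inr ⟨hvT, mem_erase.mpr ⟨h.1.symm, hx⟩⟩⟩
      have hbT : b ∈ T := hb.2.elim And.right fun h => absurd h.2 (hnotS hb hb')
      refine .inl ⟨?_, w, ?_, .inl ⟨hwS, hbT⟩⟩
      · rintro ⟨-, ⟨h, -⟩ | ⟨-, h⟩⟩
        exacts [hnotS hb hb' h, hnotS hc hc' h]
      · rintro rfl; exact hnotS hb hb' (mem_of_mem_erase hwS)
    · have hbT : b ∈ T := hb.2.elim And.right fun h => absurd h.1 hvT
      refine .inr ⟨w, ne_of_mem_erase hwS, ?_, ?_, .inl ⟨hwS, hbT⟩⟩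
      · rintro ⟨-, ⟨-, h⟩ | ⟨h, -⟩⟩
        exacts [hvT h, hwT h]
      · rintro rfl; exact hwT hbT

lemma card_supp_le (p : Finset V) : #(supp p) ≤ 2 * #p := by
  rw [two_mul]; exact (card_union_le _ _).trans (Nat.add_le_add_left card_image_le _)

lemma mem_supp_of_mem {p : Finset V} {e : V} (he : e ∈ p) : e ∈ supp p :=
  mem_union_left _ he

lemma add_one_mem_supp {p : Finset V} {e : V} (he : e ∈ p) : e + 1 ∈ supp p :=
  mem_union_right _ (mem_image_of_mem _ he)

lemma edgeOf_mem {p : Finset V} (hp : p.Nonempty) (v : V) : edgeOf p v ∈ p := by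
  unfold edgeOf e1 e2
  split_ifs
  · rw [← coe_min' hp, WithTop.untopD_coe]; exact min'_mem p hp
  · rw [← coe_max' hp, WithBot.unbotD_coe]; exact max'_mem p hp

lemma exists_eq_pair_of_card_eq_two {α : Type*} [DecidableEq α] {s : Finset α} (hs : #s = 2)
    {a : α} (ha : a ∈ s) : ∃ b, a ≠ b ∧ s = {a, b} := by
  obtain ⟨x, y, hxy, rfl⟩ := card_eq_two.mp hs
  simp only [mem_insert, mem_singleton] at ha
  rcases ha with rfl | rfl
  exacts [⟨y, hxy, rfl⟩, ⟨x, hxy.symm, pair_comm x a⟩]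

lemma otherProp_pair {p q : Finset V} (hpq : p ≠ q) : otherProp {p, q} p = q := by
  have hex : ∃ r, r ∈ ({p, q} : Finset (Finset V)) ∧ r ≠ p := ⟨q, by simp, hpq.symm⟩
  rw [otherProp, dif_pos hex]
  obtain ⟨hmem, hne⟩ := hex.choose_spec
  rw [mem_insert, mem_singleton] at hmem
  exact hmem.resolve_left hne

theorem maxProperSub_BofBd {p q : Finset V} (hpq : p ≠ q) (hW : Admissible {p, q}) {v : V}
    (hv : v ∈ supp p) (hnd : ¬ DegenerateB p q v) : MaxProperSub (BofBd p q v) (BW {p, q}) := by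
  obtain ⟨⟨-, hcard⟩, hsupp, hcross⟩ := hW
  have hp : p ∈ ({p, q} : Finset (Finset V)) := by simp
  have hq : q ∈ ({p, q} : Finset (Finset V)) := by simp
  have hsupp₄ : ∀ r ∈ ({p, q} : Finset (Finset V)), #(supp r) = 4 := fun r hr =>
    le_antisymm (by simpa [hcard r hr] using card_supp_le r)
      (by simpa using hsupp {r} (singleton_subset_iff.mpr hr) (singleton_nonempty r))
  have hunion : 5 ≤ #(supp p ∪ supp q) := by
    simpa [card_pair hpq] using hsupp {p, q} subset_rfl (insert_nonempty p {q})
  obtain ⟨hne, hw⟩ := isTNNRealization_boundaryRel p (mem_powersetCard_univ.mpr (hcard p hp))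
    q (mem_powersetCard_univ.mpr (hcard q hq)) (hsupp₄ p hp).ge (hsupp₄ q hq).ge hunion
    (hcross p hp q hq) v hv hnd
  have hpos := isPositroid_pairSet hw hne
  rw [BofBd_eq_pairSet, BW_pair_eq_pairSet hpq]
  by_cases hcol : IsCollision p q v
  · rw [boundaryRel, if_pos hcol] at hpos ⊢
    have he := edgeOf_mem (card_pos.mp (by rw [hcard p hp]; norm_num)) v
    exact maxProperSub_joinsExcept
      ⟨by simp, .inl ⟨mem_supp_of_mem he, add_one_mem_supp hcol.1⟩⟩ hpos
  · rw [boundaryRel, if_neg hcol] at hpos ⊢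
    refine maxProperSub_joins_erase hv ?_ ?_ hpos
    · have hlt : #(supp q) < #((supp p).erase v ∪ supp q) := by
        rw [hsupp₄ q hq]; exact not_lt.mp fun h => hnd ⟨hcol, h⟩
      obtain ⟨w, hw, hwq⟩ := exists_mem_notMem_of_card_lt_card hlt
      exact ⟨w, (mem_union.mp hw).resolve_right hwq, hwq⟩
    · have hlt : #(supp p) < #(supp p ∪ supp q) := by rw [hsupp₄ p hp]; exact hunion
      obtain ⟨t, ht, htp⟩ := exists_mem_notMem_of_card_lt_card hlt
      exact ⟨t, (mem_union.mp ht).resolve_left htp, htp⟩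

end WLD

open WLD in
/-- Every non-degenerate boundary diagram of an admissible Wilson loop diagram
parametrizes a codimension-one boundary cell: its boundary positroid is a positroid,
properly contained in `B(W)`, and maximal among positroids properly contained in `B(W)`. -/
theorem statement12 (W : Finset (Finset V)) (hW : Admissible W)
    (p : Finset V) (hp : p ∈ W) (v : V) (hv : v ∈ supp p)
    (hnd : ¬ Degenerate W p v) :
    MaxProperSub (BofB W p v) (BW W) := by
  obtain ⟨q, hpq, rfl⟩ := exists_eq_pair_of_card_eq_two hW.1.1 hp
  rw [Degenerate, otherProp_pair hpq] at hnd
  rw [BofB, otherProp_pair hpq]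
  exact maxProperSub_BofBd hpq hW hv hnd
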